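/- Let S be a bipotent semifield. Then the following are equivalent: (i) M_n(S) and UT_n(S) are strongly permutable for all n ≥ 2 and U_n(S) is strongly permutable for all n ≥ 3; (ii) S is isomorphic to the two-element Boolean semifield 𝔹. -/

import Mathlib

set_option maxHeartbeats 1000000

universe u

/-! ### Semiring classes.

A *semiring* here is a nonempty set with an associative commutative addition and an
associative multiplication which distributes over addition on both sides; no zero or
identity element is assumed. -/

class PlainSemiring (S : Type u) extends Add S, Mul S where
  nonempty' : Nonempty S
  add_assoc' : ∀ a b c : S, a + b + c = a + (b + c)
  add_comm' : ∀ a b : S, a + b = b + a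
  mul_assoc' : ∀ a b c : S, a * b * c = a * (b * c)
  left_distrib' : ∀ a b c : S, a * (b + c) = a * b + a * c
  right_distrib' : ∀ a b c : S, (a + b) * c = a * c + b * c

/-- A bipotent semiring: `x + y` is always either `x` or `y`.
(The induced total order is given by `x ≤ y ↔ x + y = y`.) -/
class BipotentSemiring (S : Type u) extends PlainSemiring S where
  bipotent : ∀ a b : S, a + b = a ∨ a + b = b

/-- A commutative bipotent semiring. -/
class CommBipotentSemiring (S : Type u) extends BipotentSemiring S where
  mul_comm' : ∀ a b : S, a * b = b * a

/-- `mpow a n` is the `(n+1)`-st power of `a`, so the set of positive powers of `a`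
is exactly `Set.range (mpow a)`, and the multiplicative order of `a` is the
cardinality of `Set.range (mpow a)`. -/
def mpow {S : Type*} [Mul S] (a : S) : ℕ → S
  | 0 => a
  | n + 1 => mpow a n * a

lemma mpow_mul_mpow {S : Type*} [PlainSemiring S] (a : S) (m n : ℕ) :
    mpow a m * mpow a n = mpow a (m + n + 1) := by
  induction n with
  | zero => rfl
  | succ n ih =>
    show mpow a m * (mpow a n * a) = mpow a (m + n + 1) * a
    rw [← PlainSemiring.mul_assoc', ih]

/-! ### Products of finite families, and permutability. -/

/-- Fold step used to define sums/products of possibly empty families in a structure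
with no neutral element; the overall fold is `none` iff the family is empty. -/
def optStep {S : Type*} (op : S → S → S) : Option S → S → Option S :=
  fun acc x => some (acc.elim x (fun a => op a x))

/-- The sum `s 0 + s 1 + ⋯` of a finite family, as an `Option` (`none` iff `k = 0`). -/
def finSum {S : Type*} [Add S] {k : ℕ} (s : Fin k → S) : Option S :=
  (List.ofFn s).foldl (optStep (· + ·)) none

/-- The product `s 0 * s 1 * ⋯` of a finite family, as an `Option` (`none` iff `k = 0`). -/
def finProd {S : Type*} [Mul S] {k : ℕ} (s : Fin k → S) : Option S :=
  (List.ofFn s).foldl (optStep (· * ·)) none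

/-- A multiplicative structure is `k`-permutable if every product of `k` elements is
preserved by some non-identity permutation of its factors. -/
def KPermutable (S : Type*) [Mul S] (k : ℕ) : Prop :=
  ∀ s : Fin k → S, ∃ σ : Equiv.Perm (Fin k), σ ≠ Equiv.refl (Fin k) ∧
    finProd (fun i => s (σ i)) = finProd s

/-- A semigroup is strongly permutable if it is `k`-permutable for some `k ≥ 2`. -/
def StronglyPermutable (S : Type*) [Mul S] : Prop :=
  ∃ k : ℕ, 2 ≤ k ∧ KPermutable S k

/-- A semigroup is weakly permutable if for some `k ≥ 2`, any product of `k` elements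
is computed identically by two distinct permutations of its factors. -/
def WeaklyPermutable (S : Type*) [Mul S] : Prop :=
  ∃ k : ℕ, 2 ≤ k ∧ ∀ s : Fin k → S, ∃ σ τ : Equiv.Perm (Fin k), σ ≠ τ ∧
    finProd (fun i => s (σ i)) = finProd (fun i => s (τ i))

/-- Isomorphism of semirings (bijection preserving addition and multiplication). -/
def RingLikeIso (S T : Type*) [Add S] [Mul S] [Add T] [Mul T] : Prop :=
  ∃ f : S → T, Function.Bijective f ∧ (∀ a b : S, f (a + b) = f a + f b) ∧
    (∀ a b : S, f (a * b) = f a * f b)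

/-! ### Matrices. -/

/-- Square `n × n` matrices over `S`. -/
def MatSR (S : Type u) (n : ℕ) : Type u := Fin n → Fin n → S

/-- Matrix multiplication, `(A*B) i j = Σ_k (A i k * B k j)`.  (For `n ≥ 1` — the only
case of interest — the `getD` default value is never used.) -/
def matMul {S : Type*} [Add S] [Mul S] {n : ℕ} (A B : MatSR S n) : MatSR S n :=
  fun i j => (finSum (fun k : Fin n => A i k * B k j)).getD (A i j * B i j)

/-- The multiplicative semigroup `M_n(S)`. -/
instance {S : Type*} [Add S] [Mul S] {n : ℕ} : Mul (MatSR S n) := ⟨matMul⟩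

/-! ### `S⁰`: adjoining a zero, and upper triangular matrices. -/

/-- `S` with a zero (additively neutral, multiplicatively absorbing) element adjoined. -/
inductive Adj0 (S : Type u) : Type u
  | zero : Adj0 S
  | elem : S → Adj0 S

namespace Adj0

def add' {S : Type*} [Add S] : Adj0 S → Adj0 S → Adj0 S
  | .zero, b => b
  | .elem a, .zero => .elem a
  | .elem a, .elem b => .elem (a + b)

def mul' {S : Type*} [Mul S] : Adj0 S → Adj0 S → Adj0 S
  | .zero, _ => .zero
  | .elem _, .zero => .zero
  | .elem a, .elem b => .elem (a * b)

instance {S : Type*} [Add S] : Add (Adj0 S) := ⟨add'⟩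
instance {S : Type*} [Mul S] : Mul (Adj0 S) := ⟨mul'⟩

@[simp] lemma zero_add {S : Type*} [Add S] (b : Adj0 S) : (zero : Adj0 S) + b = b := rfl
@[simp] lemma add_zero {S : Type*} [Add S] (a : Adj0 S) : a + (zero : Adj0 S) = a := by
  cases a <;> rfl
@[simp] lemma elem_add_elem {S : Type*} [Add S] (a b : S) :
    (elem a : Adj0 S) + elem b = elem (a + b) := rfl
@[simp] lemma zero_mul {S : Type*} [Mul S] (b : Adj0 S) : (zero : Adj0 S) * b = zero := rfl
@[simp] lemma mul_zero {S : Type*} [Mul S] (a : Adj0 S) : a * (zero : Adj0 S) = zero := by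
  cases a <;> rfl
@[simp] lemma elem_mul_elem {S : Type*} [Mul S] (a b : S) :
    (elem a : Adj0 S) * elem b = elem (a * b) := rfl

lemma add_eq_zero_iff {S : Type*} [Add S] (a b : Adj0 S) :
    a + b = zero ↔ a = zero ∧ b = zero := by
  cases a <;> cases b <;> simp

end Adj0

lemma foldl_optStep_adj0 {S : Type*} [Add S] (l : List (Adj0 S)) (a : Adj0 S) :
    ∃ c : Adj0 S, l.foldl (optStep (· + ·)) (some a) = some c ∧
      (c = Adj0.zero ↔ a = Adj0.zero ∧ ∀ x ∈ l, x = Adj0.zero) := by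
  induction l generalizing a with
  | nil => exact ⟨a, rfl, by simp⟩
  | cons x l ih =>
    obtain ⟨c, hc, hiff⟩ := ih (a + x)
    refine ⟨c, ?_, ?_⟩
    · simpa [optStep] using hc
    · rw [hiff, Adj0.add_eq_zero_iff]
      simp only [List.mem_cons, forall_eq_or_imp]
      tauto

lemma finSum_adj0_eq_zero {S : Type*} [Add S] {n : ℕ} (f : Fin n → Adj0 S) (i : Fin n)
    (d : Adj0 S) (h : ∀ k, f k = Adj0.zero) : (finSum f).getD d = Adj0.zero := by
  cases n with
  | zero => exact i.elim0
  | succ m =>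
    rw [finSum, List.ofFn_succ, List.foldl_cons]
    obtain ⟨c, hc, hiff⟩ := foldl_optStep_adj0 (List.ofFn fun i : Fin m => f i.succ) (f 0)
    rw [show optStep (· + ·) none (f 0) = some (f 0) from rfl, hc]
    have : c = Adj0.zero := hiff.mpr ⟨h 0, by
      intro x hx
      rw [List.mem_ofFn] at hx
      obtain ⟨j, rfl⟩ := hx
      exact h _⟩
    simp [this]

lemma finSum_adj0_ne_zero {S : Type*} [Add S] {n : ℕ} (f : Fin n → Adj0 S) (i : Fin n)
    (d : Adj0 S) (h : f i ≠ Adj0.zero) : (finSum f).getD d ≠ Adj0.zero := by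
  cases n with
  | zero => exact i.elim0
  | succ m =>
    rw [finSum, List.ofFn_succ, List.foldl_cons]
    obtain ⟨c, hc, hiff⟩ := foldl_optStep_adj0 (List.ofFn fun i : Fin m => f i.succ) (f 0)
    rw [show optStep (· + ·) none (f 0) = some (f 0) from rfl, hc]
    simp only [Option.getD_some]
    intro hcz
    obtain ⟨h0, hall⟩ := hiff.mp hcz
    induction i using Fin.cases with
    | zero => exact h h0
    | succ j => exact h (hall _ (List.mem_ofFn.mpr ⟨j, rfl⟩))

/-- Upper-triangularity over `S⁰`: entries strictly below the diagonal are the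
adjoined zero; entries on and above the diagonal lie in `S`. -/
def IsUT {S : Type*} {n : ℕ} (A : MatSR (Adj0 S) n) : Prop :=
  (∀ i j : Fin n, (j : ℕ) < (i : ℕ) → A i j = Adj0.zero) ∧
  (∀ i j : Fin n, (i : ℕ) ≤ (j : ℕ) → ∃ s : S, A i j = Adj0.elem s)

lemma IsUT.mul {S : Type*} [Add S] [Mul S] {n : ℕ} {A B : MatSR (Adj0 S) n}
    (hA : IsUT A) (hB : IsUT B) : IsUT (matMul A B) := by
  constructor
  · intro i j hji
    apply finSum_adj0_eq_zero _ i
    intro k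
    rcases le_or_gt (i : ℕ) (k : ℕ) with h | h
    · rw [hB.1 k j (lt_of_lt_of_le hji h), Adj0.mul_zero]
    · rw [hA.1 i k h, Adj0.zero_mul]
  · intro i j hij
    have hne : matMul A B i j ≠ Adj0.zero := by
      apply finSum_adj0_ne_zero _ i
      obtain ⟨s, hs⟩ := hA.2 i i le_rfl
      obtain ⟨t, ht⟩ := hB.2 i j hij
      rw [hs, ht, Adj0.elem_mul_elem]
      simp
    cases hc : matMul A B i j with
    | zero => exact absurd hc hne
    | elem s => exact ⟨s, rfl⟩

/-- The multiplicative semigroup `UT_n(S)` of upper triangular matrices over `S⁰`. -/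
def UTMat (S : Type u) (n : ℕ) : Type u := {A : MatSR (Adj0 S) n // IsUT A}

instance {S : Type*} [Add S] [Mul S] {n : ℕ} : Mul (UTMat S n) :=
  ⟨fun A B => ⟨matMul A.1 B.1, A.2.mul B.2⟩⟩

/-! ### `S^{01}`: adjoining a zero and an identity, and unitriangular matrices. -/

/-- `S` with a zero and a multiplicative identity adjoined (`S^{01}` in the paper).
The sum of `one` and an `elem` is left undefined in the paper; it is given an
arbitrary value here, and never arises in products of unitriangular matrices. -/
inductive Adj01 (S : Type u) : Type u
  | zero : Adj01 S
  | one : Adj01 S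
  | elem : S → Adj01 S

namespace Adj01

def add' {S : Type*} [Add S] : Adj01 S → Adj01 S → Adj01 S
  | .zero, b => b
  | a, .zero => a
  | .one, .one => .one
  | .one, .elem b => .elem b
  | .elem a, .one => .elem a
  | .elem a, .elem b => .elem (a + b)

def mul' {S : Type*} [Mul S] : Adj01 S → Adj01 S → Adj01 S
  | .zero, _ => .zero
  | _, .zero => .zero
  | .one, b => b
  | a, .one => a
  | .elem a, .elem b => .elem (a * b)

instance {S : Type*} [Add S] : Add (Adj01 S) := ⟨add'⟩
instance {S : Type*} [Mul S] : Mul (Adj01 S) := ⟨mul'⟩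

@[simp] lemma zero_add {S : Type*} [Add S] (b : Adj01 S) : (zero : Adj01 S) + b = b := by
  cases b <;> rfl
@[simp] lemma add_zero {S : Type*} [Add S] (a : Adj01 S) : a + (zero : Adj01 S) = a := by
  cases a <;> rfl
@[simp] lemma one_add_one {S : Type*} [Add S] : (one : Adj01 S) + one = one := rfl
@[simp] lemma elem_add_elem {S : Type*} [Add S] (a b : S) :
    (elem a : Adj01 S) + elem b = elem (a + b) := rfl
@[simp] lemma one_add_elem {S : Type*} [Add S] (b : S) :
    (one : Adj01 S) + elem b = elem b := rfl
@[simp] lemma elem_add_one {S : Type*} [Add S] (a : S) :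
    (elem a : Adj01 S) + one = elem a := rfl
@[simp] lemma zero_mul {S : Type*} [Mul S] (b : Adj01 S) : (zero : Adj01 S) * b = zero := by
  cases b <;> rfl
@[simp] lemma mul_zero {S : Type*} [Mul S] (a : Adj01 S) : a * (zero : Adj01 S) = zero := by
  cases a <;> rfl
@[simp] lemma one_mul {S : Type*} [Mul S] (b : Adj01 S) : (one : Adj01 S) * b = b := by
  cases b <;> rfl
@[simp] lemma mul_one {S : Type*} [Mul S] (a : Adj01 S) : a * (one : Adj01 S) = a := by
  cases a <;> rfl
@[simp] lemma elem_mul_elem {S : Type*} [Mul S] (a b : S) :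
    (elem a : Adj01 S) * elem b = elem (a * b) := rfl

lemma mul_ne_one {S : Type*} [Mul S] {a b : Adj01 S} (ha : a ≠ one) (hb : b ≠ one) :
    a * b ≠ one := by
  cases a <;> cases b <;> simp_all

lemma add_ne_one {S : Type*} [Add S] {a b : Adj01 S} (ha : a ≠ one) (hb : b ≠ one) :
    a + b ≠ one := by
  cases a <;> cases b <;> simp_all

lemma add_01 {S : Type*} [Add S] {a b : Adj01 S} (ha : a = zero ∨ a = one)
    (hb : b = zero ∨ b = one) :
    (a + b = zero ∨ a + b = one) ∧ (a + b = one ↔ a = one ∨ b = one) := by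
  rcases ha with rfl | rfl <;> rcases hb with rfl | rfl <;> simp

end Adj01

lemma foldl_optStep_adj01 {S : Type*} [Add S] (l : List (Adj01 S)) (a : Adj01 S)
    (ha : a = Adj01.zero ∨ a = Adj01.one) (hl : ∀ x ∈ l, x = Adj01.zero ∨ x = Adj01.one) :
    ∃ c : Adj01 S, l.foldl (optStep (· + ·)) (some a) = some c ∧
      (c = Adj01.zero ∨ c = Adj01.one) ∧
      (c = Adj01.one ↔ a = Adj01.one ∨ ∃ x ∈ l, x = Adj01.one) := by
  induction l generalizing a with
  | nil => exact ⟨a, rfl, ha, by simp⟩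
  | cons x l ih =>
    have hx := hl x (by simp)
    have key := Adj01.add_01 ha hx
    obtain ⟨c, hc, hc01, hiff⟩ := ih (a + x) key.1 (fun y hy => hl y (by simp [hy]))
    refine ⟨c, by simpa [optStep] using hc, hc01, ?_⟩
    rw [hiff, key.2]
    simp only [List.mem_cons, exists_eq_or_imp]
    tauto

lemma foldl_optStep_adj01_ne_one {S : Type*} [Add S] (l : List (Adj01 S)) (a : Adj01 S)
    (ha : a ≠ Adj01.one) (hl : ∀ x ∈ l, x ≠ Adj01.one) :
    ∃ c : Adj01 S, l.foldl (optStep (· + ·)) (some a) = some c ∧ c ≠ Adj01.one := by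
  induction l generalizing a with
  | nil => exact ⟨a, rfl, ha⟩
  | cons x l ih =>
    have hax : a + x ≠ Adj01.one := Adj01.add_ne_one ha (hl x (by simp))
    obtain ⟨c, hc, hcne⟩ := ih (a + x) hax (fun y hy => hl y (by simp [hy]))
    exact ⟨c, by simpa [optStep] using hc, hcne⟩

lemma finSum_adj01_eq_one {S : Type*} [Add S] {n : ℕ} (f : Fin n → Adj01 S) (i : Fin n)
    (d : Adj01 S) (h01 : ∀ k, f k = Adj01.zero ∨ f k = Adj01.one) (hi : f i = Adj01.one) :
    (finSum f).getD d = Adj01.one := by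
  cases n with
  | zero => exact i.elim0
  | succ m =>
    rw [finSum, List.ofFn_succ, List.foldl_cons]
    obtain ⟨c, hc, _, hiff⟩ := foldl_optStep_adj01 (List.ofFn fun i : Fin m => f i.succ) (f 0)
      (h01 0) (by
        intro x hx
        rw [List.mem_ofFn] at hx
        obtain ⟨j, rfl⟩ := hx
        exact h01 _)
    rw [show optStep (· + ·) none (f 0) = some (f 0) from rfl, hc]
    simp only [Option.getD_some]
    apply hiff.mpr
    induction i using Fin.cases with
    | zero => exact Or.inl hi
    | succ j => exact Or.inr ⟨f j.succ, List.mem_ofFn.mpr ⟨j, rfl⟩, hi⟩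

lemma finSum_adj01_eq_zero {S : Type*} [Add S] {n : ℕ} (f : Fin n → Adj01 S) (i : Fin n)
    (d : Adj01 S) (h : ∀ k, f k = Adj01.zero) : (finSum f).getD d = Adj01.zero := by
  cases n with
  | zero => exact i.elim0
  | succ m =>
    rw [finSum, List.ofFn_succ, List.foldl_cons]
    obtain ⟨c, hc, hc01, hiff⟩ := foldl_optStep_adj01 (List.ofFn fun i : Fin m => f i.succ)
      (f 0) (Or.inl (h 0)) (by
        intro x hx
        rw [List.mem_ofFn] at hx
        obtain ⟨j, rfl⟩ := hx
        exact Or.inl (h _))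
    rw [show optStep (· + ·) none (f 0) = some (f 0) from rfl, hc]
    simp only [Option.getD_some]
    rcases hc01 with h' | h'
    · exact h'
    · exfalso
      rcases hiff.mp h' with h'' | ⟨x, hx, hx1⟩
      · rw [h 0] at h''; cases h''
      · rw [List.mem_ofFn] at hx
        obtain ⟨j, rfl⟩ := hx
        rw [h _] at hx1; cases hx1

lemma finSum_adj01_ne_one {S : Type*} [Add S] {n : ℕ} (f : Fin n → Adj01 S) (i : Fin n)
    (d : Adj01 S) (h : ∀ k, f k ≠ Adj01.one) : (finSum f).getD d ≠ Adj01.one := by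
  cases n with
  | zero => exact i.elim0
  | succ m =>
    rw [finSum, List.ofFn_succ, List.foldl_cons]
    obtain ⟨c, hc, hcne⟩ := foldl_optStep_adj01_ne_one (List.ofFn fun i : Fin m => f i.succ)
      (f 0) (h 0) (by
        intro x hx
        rw [List.mem_ofFn] at hx
        obtain ⟨j, rfl⟩ := hx
        exact h _)
    rw [show optStep (· + ·) none (f 0) = some (f 0) from rfl, hc]
    simpa using hcne

/-- Unitriangularity over `S^{01}`: the adjoined zero strictly below the diagonal, the
adjoined identity on the diagonal, and entries of `S⁰` (i.e. anything except the
adjoined identity) strictly above the diagonal. -/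
def IsU {S : Type*} {n : ℕ} (A : MatSR (Adj01 S) n) : Prop :=
  (∀ i j : Fin n, (j : ℕ) < (i : ℕ) → A i j = Adj01.zero) ∧
  (∀ i : Fin n, A i i = Adj01.one) ∧
  (∀ i j : Fin n, (i : ℕ) < (j : ℕ) → A i j ≠ Adj01.one)

lemma IsU.mul {S : Type*} [Add S] [Mul S] {n : ℕ} {A B : MatSR (Adj01 S) n}
    (hA : IsU A) (hB : IsU B) : IsU (matMul A B) := by
  refine ⟨?_, ?_, ?_⟩
  · intro i j hji
    apply finSum_adj01_eq_zero _ i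
    intro k
    rcases le_or_gt (i : ℕ) (k : ℕ) with h | h
    · rw [hB.1 k j (lt_of_lt_of_le hji h), Adj01.mul_zero]
    · rw [hA.1 i k h, Adj01.zero_mul]
  · intro i
    apply finSum_adj01_eq_one _ i
    · intro k
      rcases lt_trichotomy (k : ℕ) (i : ℕ) with h | h | h
      · rw [hA.1 i k h, Adj01.zero_mul]; exact Or.inl rfl
      · have : k = i := Fin.ext h
        subst this
        rw [hA.2.1 k, hB.2.1 k, Adj01.one_mul]; exact Or.inr rfl
      · rw [hB.1 k i h, Adj01.mul_zero]; exact Or.inl rfl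
    · rw [hA.2.1 i, hB.2.1 i, Adj01.one_mul]
  · intro i j hij
    apply finSum_adj01_ne_one _ i
    intro k
    rcases lt_trichotomy (k : ℕ) (i : ℕ) with h | h | h
    · rw [hA.1 i k h, Adj01.zero_mul]; exact fun h => by cases h
    · have : k = i := Fin.ext h
      subst this
      rw [hA.2.1 k, Adj01.one_mul]
      exact hB.2.2 k j (by omega)
    · rcases lt_trichotomy (k : ℕ) (j : ℕ) with h' | h' | h'
      · exact Adj01.mul_ne_one (hA.2.2 i k h) (hB.2.2 k j h')
      · have : k = j := Fin.ext h'
        subst this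
        rw [hB.2.1 k, Adj01.mul_one]
        exact hA.2.2 i k h
      · rw [hB.1 k j h', Adj01.mul_zero]; exact fun h => by cases h

/-- The multiplicative monoid `U_n(S)` of unitriangular matrices over `S^{01}`. -/
def UMat (S : Type u) (n : ℕ) : Type u := {A : MatSR (Adj01 S) n // IsU A}

instance {S : Type*} [Add S] [Mul S] {n : ℕ} : Mul (UMat S n) :=
  ⟨fun A B => ⟨matMul A.1 B.1, A.2.mul B.2⟩⟩

/-! ### Monogenic subsemirings. -/

/-- The carrier of the monogenic subsemiring `⟨a⟩` generated by `a` is the set of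
positive powers of `a`; in a bipotent semiring it is closed under addition. -/
instance genAdd {S : Type*} [BipotentSemiring S] (a : S) : Add ↥(Set.range (mpow a)) :=
  ⟨fun p q => ⟨p.1 + q.1, by
    rcases BipotentSemiring.bipotent p.1 q.1 with h | h <;> rw [h]
    exacts [p.2, q.2]⟩⟩

instance genMul {S : Type*} [BipotentSemiring S] (a : S) : Mul ↥(Set.range (mpow a)) :=
  ⟨fun p q => ⟨p.1 * q.1, by
    obtain ⟨m, hm⟩ := p.2
    obtain ⟨n, hn⟩ := q.2
    exact ⟨m + n + 1, by rw [← hm, ← hn, mpow_mul_mpow]⟩⟩⟩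

/-! ### Concrete bipotent semirings. -/

/-- The tropical semiring `ℕ_max` of positive natural numbers: addition is `max`,
multiplication is ordinary addition. -/
def NMax : Type := {n : ℕ // 0 < n}

instance : Add NMax := ⟨fun a b => ⟨max a.1 b.1, by have := a.2; have := b.2; omega⟩⟩
instance : Mul NMax := ⟨fun a b => ⟨a.1 + b.1, by have := a.2; have := b.2; omega⟩⟩

/-- The tropical semiring `(-ℕ)_max` of negative integers: addition is `max`,
multiplication is ordinary addition. -/
def NegNMax : Type := {z : ℤ // z < 0}

instance : Add NegNMax := ⟨fun a b => ⟨max a.1 b.1, by have := a.2; have := b.2; omega⟩⟩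
instance : Mul NegNMax := ⟨fun a b => ⟨a.1 + b.1, by have := a.2; have := b.2; omega⟩⟩

/-- The truncated tropical semiring `[k]_max` on `{1,…,k}`: addition is `max`,
multiplication is `a·b = min (a+b) k`. -/
def KMax (k : ℕ) : Type := {n : ℕ // 0 < n ∧ n ≤ k}

instance {k : ℕ} : Add (KMax k) :=
  ⟨fun a b => ⟨max a.1 b.1, by have := a.2; have := b.2; omega⟩⟩
instance {k : ℕ} : Mul (KMax k) :=
  ⟨fun a b => ⟨min (a.1 + b.1) k, by have := a.2; have := b.2; omega⟩⟩

/-- The truncated tropical semiring `[-k]_max` on `{-k,…,-1}`: addition is `max`,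
multiplication is `a·b = max (a+b) (-k)`. -/
def NegKMax (k : ℕ) : Type := {z : ℤ // -(k : ℤ) ≤ z ∧ z ≤ -1}

instance {k : ℕ} : Add (NegKMax k) :=
  ⟨fun a b => ⟨max a.1 b.1, by have := a.2; have := b.2; omega⟩⟩
instance {k : ℕ} : Mul (NegKMax k) :=
  ⟨fun a b => ⟨max (a.1 + b.1) (-(k : ℤ)), by have := a.2; have := b.2; omega⟩⟩

/-- The two-element boolean semifield `𝔹`: `{0,1}` with `0 < 1`, addition `max` (= "or")
and the usual multiplication (= "and"). -/
def BoolSR : Type := Bool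

instance : Add BoolSR := ⟨fun a b => (Bool.or a b : Bool)⟩
instance : Mul BoolSR := ⟨fun a b => (Bool.and a b : Bool)⟩

/-- A chain semiring: a linearly ordered set with addition `max` and multiplication `min`. -/
def ChainSR (L : Type u) [LinearOrder L] : Type u := L

instance {L : Type u} [LinearOrder L] : Add (ChainSR L) := ⟨fun a b => (max a b : L)⟩
instance {L : Type u} [LinearOrder L] : Mul (ChainSR L) := ⟨fun a b => (min a b : L)⟩

/-- The three-element commutative bipotent semiring of Proposition 1: order `A < B < C`
(addition is `max`), every element multiplicatively idempotent, and all products of two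
distinct elements equal to `B`. -/
inductive Three : Type
  | A : Three
  | B : Three
  | C : Three
deriving DecidableEq

instance : Fintype Three := ⟨{Three.A, Three.B, Three.C}, fun x => by cases x <;> simp⟩

def Three.add' : Three → Three → Three
  | .A, y => y
  | x, .A => x
  | .B, y => y
  | x, .B => x
  | .C, .C => .C

def Three.mul' : Three → Three → Three
  | .A, .A => .A
  | .B, .B => .B
  | .C, .C => .C
  | _, _ => .B

instance : Add Three := ⟨Three.add'⟩
instance : Mul Three := ⟨Three.mul'⟩

instance : CommBipotentSemiring Three where
  nonempty' := ⟨Three.A⟩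
  add_assoc' := by decide
  add_comm' := by decide
  mul_assoc' := by decide
  left_distrib' := by decide
  right_distrib' := by decide
  bipotent := by decide
  mul_comm' := by decide

/-- A bundled (possibly zero-less and identity-less) semiring, used to quantify over
semirings inside hypotheses. -/
structure BundledSemiring : Type 1 where
  carrier : Type
  add : carrier → carrier → carrier
  mul : carrier → carrier → carrier
  nonempty' : Nonempty carrier
  add_assoc' : ∀ a b c, add (add a b) c = add a (add b c)
  add_comm' : ∀ a b, add a b = add b a
  mul_assoc' : ∀ a b c, mul (mul a b) c = mul a (mul b c)
  left_distrib' : ∀ a b c, mul a (add b c) = add (mul a b) (mul a c)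
  right_distrib' : ∀ a b c, mul (add a b) c = add (mul a c) (mul b c)

/-! ### Semifields. -/

/-- `z` is a zero element: additively neutral and multiplicatively absorbing. -/
def IsZeroElem {S : Type*} [Add S] [Mul S] (z : S) : Prop :=
  ∀ x : S, z + x = x ∧ x + z = x ∧ z * x = z ∧ x * z = z

/-- `S` is a semifield: a commutative semiring, possibly without zero, whose set of
non-zero elements forms a group under multiplication (with identity `e`). -/
def IsSemifield (S : Type*) [Add S] [Mul S] : Prop :=
  ∃ e : S, ¬ IsZeroElem e ∧
    (∀ x : S, ¬ IsZeroElem x → e * x = x ∧ x * e = x) ∧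
    (∀ x y : S, ¬ IsZeroElem x → ¬ IsZeroElem y → ¬ IsZeroElem (x * y)) ∧
    (∀ x : S, ¬ IsZeroElem x → ∃ y : S, ¬ IsZeroElem y ∧ x * y = e ∧ y * x = e)

/-! ### Truncated tropical semirings. -/

/-- The underlying set `[x,y] ∪ {0}` of the truncated tropical semiring `𝕋_{[x,y]}`
(without the zero element `-∞`), for `0 ≤ x`.  Addition is `max`; multiplication is
`y`-truncated addition `a ⊗ b = min (a+b) y`, with the element `0` acting as the
multiplicative identity. -/
def TTb (x y : ℝ) (_hx : 0 ≤ x) : Type := {r : ℝ // r = 0 ∨ (x ≤ r ∧ r ≤ y)}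

namespace TTb

protected def add {x y : ℝ} {hx : 0 ≤ x} (a b : TTb x y hx) : TTb x y hx :=
  ⟨max a.1 b.1, by rcases max_choice a.1 b.1 with h | h <;> rw [h]
                   exacts [a.2, b.2]⟩

protected noncomputable def mul {x y : ℝ} {hx : 0 ≤ x} (a b : TTb x y hx) : TTb x y hx :=
  if ha : a.1 = 0 then b else if hb : b.1 = 0 then a else
    ⟨min (a.1 + b.1) y, by
      rcases a.2 with h | h
      · exact absurd h ha
      rcases b.2 with h' | h'
      · exact absurd h' hb
      right
      exact ⟨le_min (by linarith [h.1, h'.1]) (by linarith [h.1, h.2]), min_le_right _ _⟩⟩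

instance {x y : ℝ} {hx : 0 ≤ x} : Add (TTb x y hx) := ⟨TTb.add⟩
noncomputable instance {x y : ℝ} {hx : 0 ≤ x} : Mul (TTb x y hx) := ⟨TTb.mul⟩

end TTb

/-- The truncated tropical semiring `𝕋_{[x,y]}` (for `0 ≤ x < y`): the real interval
`[x,y]` together with a multiplicative identity `0` and a zero `-∞`, with addition
`max` and multiplication the `y`-truncated addition `a ⊗ b = min (a+b) y`. -/
abbrev TT (x y : ℝ) (hx : 0 ≤ x) : Type := Adj0 (TTb x y hx)

/-- The multiplicative identity `0` of `𝕋_{[x,y]}`. -/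
noncomputable def ttId (x y : ℝ) (hx : 0 ≤ x) : TT x y hx := Adj0.elem ⟨0, Or.inl rfl⟩

lemma ttId_mul {x y : ℝ} {hx : 0 ≤ x} (b : TT x y hx) : ttId x y hx * b = b := by
  cases b with
  | zero => rfl
  | elem e =>
    show Adj0.elem (TTb.mul ⟨0, Or.inl rfl⟩ e) = Adj0.elem e
    first
      | exact congrArg Adj0.elem (dif_pos rfl)
      | (unfold TTb.mul; simp)
      | simp [TTb.mul]

/-- The subsemigroup `S` of `M_2(𝕋_{[1,z]})` of matrices of the form `[[0,a],[-∞,b]]`. -/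
noncomputable def UpperS (z : ℝ) (hz : (0:ℝ) ≤ 1) : Type :=
  {A : MatSR (TT 1 z hz) 2 // A 0 0 = ttId 1 z hz ∧ A 1 0 = Adj0.zero}

/-- The subsemigroup `S'` of `M_2(𝕋_{[1,z]})` of matrices of the form `[[0,-∞],[a,b]]`. -/
noncomputable def LowerS (z : ℝ) (hz : (0:ℝ) ≤ 1) : Type :=
  {A : MatSR (TT 1 z hz) 2 // A 0 0 = ttId 1 z hz ∧ A 0 1 = Adj0.zero}

noncomputable instance {z : ℝ} {hz : (0:ℝ) ≤ 1} : Mul (UpperS z hz) :=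
  ⟨fun A B => ⟨A.1 * B.1, by
    obtain ⟨hA1, hA2⟩ := A.2
    obtain ⟨hB1, hB2⟩ := B.2
    constructor
    · show A.1 0 0 * B.1 0 0 + A.1 0 1 * B.1 1 0 = ttId 1 z hz
      rw [hA1, hB1, hB2, ttId_mul, Adj0.mul_zero, Adj0.add_zero]
    · show A.1 1 0 * B.1 0 0 + A.1 1 1 * B.1 1 0 = Adj0.zero
      rw [hA2, hB2, Adj0.zero_mul, Adj0.mul_zero, Adj0.add_zero]⟩⟩

noncomputable instance {z : ℝ} {hz : (0:ℝ) ≤ 1} : Mul (LowerS z hz) :=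
  ⟨fun A B => ⟨A.1 * B.1, by
    obtain ⟨hA1, hA2⟩ := A.2
    obtain ⟨hB1, hB2⟩ := B.2
    constructor
    · show A.1 0 0 * B.1 0 0 + A.1 0 1 * B.1 1 0 = ttId 1 z hz
      rw [hA1, hB1, hA2, ttId_mul, Adj0.zero_mul, Adj0.add_zero]
    · show A.1 0 0 * B.1 0 1 + A.1 0 1 * B.1 1 1 = Adj0.zero
      rw [hA1, hB2, hA2, ttId_mul, Adj0.zero_mul, Adj0.add_zero]⟩⟩

/-!
Unless `S = {0, 1} ≅ 𝔹`, the semifield `S` has a non-zero element `b ≠ 1`, hence one `a > 1`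
(`b` or `b⁻¹`), and `n ↦ aⁿ` is strictly increasing. Put `T_v = [[a, a^(v+1)], [0, a²]]` in
`UT₂(S)`. The corner entry of `T_{y 0} ⋯ T_{y m}` is the tropical sum `∑ⱼ a^(2m + 1 + y j - j)`:
it is `a^(2m+1)` for `y = id`, and strictly larger as soon as `y j > j` for some `j`, which
happens for every non-identity permutation `y`. So `UT₂(S)` is not `k`-permutable for any `k`.
Conversely `𝔹` is finite, and among `|T| + 2` factors in a finite semigroup `T` two coincide,
so swapping them fixes the product.
-/

lemma Equiv.Perm.exists_lt_apply_of_ne_refl {k : ℕ} {σ : Equiv.Perm (Fin k)}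
    (hσ : σ ≠ Equiv.refl (Fin k)) : ∃ j, j < σ j := by
  by_contra! h
  apply hσ
  ext j
  have hsum : ∑ i : Fin k, ((σ i : Fin k) : ℕ) = ∑ i : Fin k, (i : ℕ) :=
    Equiv.sum_comp σ (fun i => (i : ℕ))
  exact (Finset.sum_eq_sum_iff_of_le fun i _ => Fin.le_def.mp (h i)).mp hsum j
    (Finset.mem_univ j)

lemma finProd_succ_eq_optStep {T : Type*} [Mul T] {m : ℕ} (s : Fin (m + 1) → T) :
    finProd s = optStep (· * ·) (finProd fun i => s i.castSucc) (s (Fin.last m)) := by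
  rw [finProd, List.ofFn_succ', List.concat_eq_append, List.foldl_append]
  rfl

lemma stronglyPermutable_of_finite (T : Type*) [Mul T] [Finite T] : StronglyPermutable T := by
  cases nonempty_fintype T
  refine ⟨Fintype.card T + 2, by omega, fun s => ?_⟩
  obtain ⟨i, j, hne, hij⟩ := Fintype.exists_ne_map_eq_of_card_lt s (by simp)
  refine ⟨Equiv.swap i j, by simpa [Equiv.swap_eq_refl_iff] using hne,
    congrArg finProd (funext fun x => ?_)⟩
  rw [Equiv.swap_apply_def]
  split_ifs with hi hj
  · rw [hi, hij]
  · rw [hj, hij]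
  · rfl

instance {S : Type*} [Finite S] : Finite (Adj0 S) :=
  Finite.of_surjective (fun o : Option S => o.elim .zero .elem) <| by
    rintro (_ | s)
    exacts [⟨none, rfl⟩, ⟨some s, rfl⟩]

instance {S : Type*} [Finite S] : Finite (Adj01 S) :=
  Finite.of_surjective (fun o : Option (Option S) => o.elim .zero (·.elim .one .elem)) <| by
    rintro (_ | _ | s)
    exacts [⟨none, rfl⟩, ⟨some none, rfl⟩, ⟨some (some s), rfl⟩]

instance {S : Type*} [Finite S] {n : ℕ} : Finite (MatSR S n) :=
  inferInstanceAs (Finite (Fin n → Fin n → S))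

instance {S : Type*} [Finite S] {n : ℕ} : Finite (UTMat S n) :=
  inferInstanceAs (Finite {A : MatSR (Adj0 S) n // IsUT A})

instance {S : Type*} [Finite S] {n : ℕ} : Finite (UMat S n) :=
  inferInstanceAs (Finite {A : MatSR (Adj01 S) n // IsU A})

lemma RingLikeIso.finite_of_boolSR {S : Type*} [Add S] [Mul S] (h : RingLikeIso S BoolSR) :
    Finite S :=
  have : Finite BoolSR := inferInstanceAs (Finite Bool)
  let ⟨_, hf, _⟩ := h
  Finite.of_injective _ hf.1

namespace BipotentSemiring

variable {S : Type*} [BipotentSemiring S]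

lemma add_idem (x : S) : x + x = x := (bipotent x x).elim id id

instance toPartialOrder : PartialOrder S where
  le x y := x + y = y
  le_refl := add_idem
  le_trans x y z (hxy : x + y = y) (hyz : y + z = z) := by
    show x + z = z
    rw [← hyz, ← PlainSemiring.add_assoc', hxy]
  le_antisymm x y (hxy : x + y = y) (hyx : y + x = x) := by
    rw [← hyx, PlainSemiring.add_comm', hxy]

lemma le_def {x y : S} : x ≤ y ↔ x + y = y := Iff.rfl

lemma left_le_add (x y : S) : x ≤ x + y := by
  rw [le_def, ← PlainSemiring.add_assoc', add_idem]

lemma right_le_add (x y : S) : y ≤ x + y := by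
  rw [PlainSemiring.add_comm']
  exact left_le_add y x

lemma mul_le_mul_right {x y : S} (h : x ≤ y) (z : S) : x * z ≤ y * z := by
  rw [le_def, ← PlainSemiring.right_distrib', h]

lemma mul_le_mul_left {x y : S} (h : x ≤ y) (z : S) : z * x ≤ z * y := by
  rw [le_def, ← PlainSemiring.left_distrib', h]

lemma mpow_monotone {a : S} (ha : a ≤ a * a) : Monotone (mpow a) := by
  refine monotone_nat_of_le_succ fun n => ?_
  induction n with
  | zero => exact ha
  | succ n ih => exact mul_le_mul_right ih a

end BipotentSemiring

open BipotentSemiring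

def triUT {S : Type*} (x y z : S) : UTMat S 2 :=
  ⟨![![.elem x, .elem y], ![.zero, .elem z]], by
    refine ⟨fun i j h => ?_, fun i j h => ?_⟩ <;> fin_cases i <;> fin_cases j <;>
      simp_all⟩

lemma triUT_mul {S : Type*} [Add S] [Mul S] (x y z x' y' z' : S) :
    triUT x y z * triUT x' y' z' = triUT (x * x') (x * y' + y * z') (z * z') := by
  apply Subtype.ext
  funext i j
  fin_cases i <;> fin_cases j <;> rfl

section PowTri

variable {S : Type*} [BipotentSemiring S]

def powTri (a : S) (v : ℕ) : UTMat S 2 := triUT a (mpow a v) (a * a)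

def powTriCorner (a : S) : (m : ℕ) → (Fin (m + 1) → ℕ) → S
  | 0, y => mpow a (y 0)
  | m + 1, y => mpow a m * mpow a (y (Fin.last (m + 1))) +
      powTriCorner a m (fun i => y i.castSucc) * (a * a)

lemma finProd_powTri (a : S) (m : ℕ) (y : Fin (m + 1) → ℕ) :
    finProd (fun i => powTri a (y i)) =
      some (triUT (mpow a m) (powTriCorner a m y) (mpow a (2 * m + 1))) := by
  induction m with
  | zero => rfl
  | succ m ih =>
    rw [finProd_succ_eq_optStep, ih]
    show some (triUT _ _ _ * triUT a _ (a * a)) = _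
    rw [triUT_mul]
    exact congrArg some (congrArg (triUT _ _) (mpow_mul_mpow a (2 * m + 1) 1))

lemma powTriCorner_id (a : S) (m : ℕ) : powTriCorner a m (fun i => i) = mpow a (2 * m) := by
  induction m with
  | zero => rfl
  | succ m ih =>
    show mpow a m * mpow a (m + 1) + powTriCorner a m (fun i => i) * mpow a 1 = _
    rw [ih, mpow_mul_mpow, mpow_mul_mpow, show m + (m + 1) + 1 = 2 * (m + 1) by omega,
      show 2 * m + 1 + 1 = 2 * (m + 1) by omega, BipotentSemiring.add_idem]

lemma mpow_le_powTriCorner (a : S) (m : ℕ) (y : Fin (m + 1) → ℕ) (j : Fin (m + 1)) :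
    mpow a (2 * m + y j - j) ≤ powTriCorner a m y := by
  induction m with
  | zero =>
    rw [Fin.fin_one_eq_zero j]
    exact (congrArg (mpow a) (by simp)).le
  | succ m ih =>
    refine Fin.lastCases ?_ (fun j => ?_) j
    · refine le_trans (le_of_eq ?_) (left_le_add _ _)
      rw [mpow_mul_mpow]
      congr 1
      simp only [Fin.val_last]
      omega
    · refine le_trans (le_of_eq ?_)
        ((mul_le_mul_right (ih _ j) (a * a)).trans (right_le_add _ _))
      show _ = _ * mpow a 1
      rw [mpow_mul_mpow]
      congr 1
      simp only [Fin.val_castSucc]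
      omega

end PowTri

lemma not_kPermutable_utMat_two {S : Type*} [BipotentSemiring S] {a : S} (ha : a ≤ a * a)
    (hinj : Function.Injective (mpow a)) (k : ℕ) : ¬ KPermutable (UTMat S 2) k := by
  intro hperm
  obtain ⟨σ, hσ, hprod⟩ := hperm fun i => powTri a i
  obtain ⟨j, hj⟩ := σ.exists_lt_apply_of_ne_refl hσ
  obtain ⟨m, rfl⟩ : ∃ m, k = m + 1 := ⟨k - 1, by omega⟩
  rw [finProd_powTri a m (fun i => σ i), finProd_powTri a m (fun i => i), powTriCorner_id]
    at hprod
  have hcorner : powTriCorner a m (fun i => σ i) = mpow a (2 * m) :=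
    Adj0.elem.inj (congrArg (fun A : UTMat S 2 => A.1 0 1) (Option.some.inj hprod))
  have hle := mpow_le_powTriCorner a m (fun i => σ i) j
  rw [hcorner] at hle
  have := hinj (le_antisymm hle (mpow_monotone ha (by omega)))
  omega

section Semifield

variable {S : Type*} [CommBipotentSemiring S] {e : S}

lemma ringLikeIso_boolSR_of_forall_eq (heZ : ¬ IsZeroElem e)
    (hid : ∀ x : S, ¬ IsZeroElem x → e * x = x ∧ x * e = x)
    (hall : ∀ x : S, ¬ IsZeroElem x → x = e) : RingLikeIso S BoolSR := by
  classical
  obtain ⟨z, hz⟩ : ∃ z : S, IsZeroElem z := by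
    by_contra! h
    refine heZ fun x => ?_
    rw [hall x (h x), BipotentSemiring.add_idem, (hid e heZ).1]
    exact ⟨rfl, rfl, rfl, rfl⟩
  have hS : ∀ x : S, x = z ∨ x = e := fun x => by
    by_cases hx : IsZeroElem x
    · exact .inl ((hz x).2.1.symm.trans (hx z).1)
    · exact .inr (hall x hx)
  have hze : z ≠ e := fun h => heZ (h ▸ hz)
  set f : S → BoolSR := fun x => (decide (x = e) : Bool)
  have hfz : f z = false := decide_eq_false hze
  have hfe : f e = true := decide_eq_true rfl
  refine ⟨f, ⟨fun x y hxy => ?_, ?_⟩, fun x y => ?_, fun x y => ?_⟩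
  · obtain hx | hx := hS x <;> obtain hy | hy := hS y <;> subst x y
    exacts [rfl, absurd (hfz.symm.trans (hxy.trans hfe)) Bool.false_ne_true,
      absurd (hfz.symm.trans (hxy.symm.trans hfe)) Bool.false_ne_true, rfl]
  · rintro (_ | _)
    exacts [⟨z, hfz⟩, ⟨e, hfe⟩]
  · obtain hx | hx := hS x <;> obtain hy | hy := hS y <;> subst x y <;>
      simp only [(hz _).1, (hz _).2.1, BipotentSemiring.add_idem, hfz, hfe] <;> rfl
  · obtain hx | hx := hS x <;> obtain hy | hy := hS y <;> subst x y <;>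
      simp only [(hz _).2.2.1, (hz _).2.2.2, (hid e heZ).1, hfz, hfe] <;> rfl

lemma mpow_not_isZeroElem
    (hcl : ∀ x y : S, ¬ IsZeroElem x → ¬ IsZeroElem y → ¬ IsZeroElem (x * y)) {a : S}
    (haZ : ¬ IsZeroElem a) (n : ℕ) : ¬ IsZeroElem (mpow a n) := by
  induction n with
  | zero => exact haZ
  | succ n ih => exact hcl _ _ ih haZ

lemma exists_le_ne_of_ne (hid : ∀ x : S, ¬ IsZeroElem x → e * x = x ∧ x * e = x)
    (hinv : ∀ x : S, ¬ IsZeroElem x → ∃ y : S, ¬ IsZeroElem y ∧ x * y = e ∧ y * x = e)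
    {b : S} (hbZ : ¬ IsZeroElem b) (hbe : b ≠ e) : ∃ a : S, ¬ IsZeroElem a ∧ e ≤ a ∧ a ≠ e := by
  rcases BipotentSemiring.bipotent e b with hbe' | heb
  · obtain ⟨c, hcZ, hbc, hcb⟩ := hinv b hbZ
    refine ⟨c, hcZ, ?_, fun hce => hbe ?_⟩
    · have := mul_le_mul_left ((PlainSemiring.add_comm' b e).trans hbe') c
      rwa [hcb, (hid c hcZ).2] at this
    · calc b = b * e := (hid b hbZ).2.symm
        _ = b * c := by rw [hce]
        _ = e := hbc
  · exact ⟨b, hbZ, heb, hbe⟩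

lemma le_mul_self_of_le (hid : ∀ x : S, ¬ IsZeroElem x → e * x = x ∧ x * e = x)
    {a : S} (haZ : ¬ IsZeroElem a) (hea : e ≤ a) : a ≤ a * a := by
  simpa only [(hid a haZ).1] using mul_le_mul_right hea a

lemma mpow_injective (hid : ∀ x : S, ¬ IsZeroElem x → e * x = x ∧ x * e = x)
    (hcl : ∀ x y : S, ¬ IsZeroElem x → ¬ IsZeroElem y → ¬ IsZeroElem (x * y))
    (hinv : ∀ x : S, ¬ IsZeroElem x → ∃ y : S, ¬ IsZeroElem y ∧ x * y = e ∧ y * x = e)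
    {a : S} (haZ : ¬ IsZeroElem a) (hea : e ≤ a) (hae : a ≠ e) :
    Function.Injective (mpow a) := by
  have key : ∀ m d, mpow a m * mpow a d ≠ mpow a m := by
    intro m d h
    obtain ⟨u, -, -, hu⟩ := hinv (mpow a m) (mpow_not_isZeroElem hcl haZ m)
    have hd : mpow a d = e := by
      rw [← (hid _ (mpow_not_isZeroElem hcl haZ d)).1, ← hu, PlainSemiring.mul_assoc', h]
    exact hae (le_antisymm (hd ▸ mpow_monotone (le_mul_self_of_le hid haZ hea) d.zero_le) hea)
  intro m n h
  by_contra hne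
  rcases Nat.lt_or_gt_of_ne hne with hmn | hmn
  · exact key m (n - m - 1) (by rw [mpow_mul_mpow, show m + (n - m - 1) + 1 = n by omega, h])
  · exact key n (m - n - 1) (by rw [mpow_mul_mpow, show n + (m - n - 1) + 1 = m by omega, h])

end Semifield

theorem IsSemifield.ringLikeIso_boolSR_or_exists_mpow_injective {S : Type*}
    [CommBipotentSemiring S] (hS : IsSemifield S) :
    RingLikeIso S BoolSR ∨ ∃ a : S, a ≤ a * a ∧ Function.Injective (mpow a) := by
  obtain ⟨e, heZ, hid, hcl, hinv⟩ := hS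
  by_cases hall : ∀ x : S, ¬ IsZeroElem x → x = e
  · exact .inl (ringLikeIso_boolSR_of_forall_eq heZ hid hall)
  push Not at hall
  obtain ⟨b, hbZ, hbe⟩ := hall
  obtain ⟨a, haZ, hea, hae⟩ := exists_le_ne_of_ne hid hinv hbZ hbe
  exact .inr ⟨a, le_mul_self_of_le hid haZ hea, mpow_injective hid hcl hinv haZ hea hae⟩

/-- for a bipotent semifield `S`, the semigroups `M_n(S)` and `UT_n(S)`
are strongly permutable for all `n ≥ 2` and `U_n(S)` is strongly permutable for all
`n ≥ 3` if and only if `S` is (isomorphic to) the two-element boolean semifield. -/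
theorem stmt_11 {S : Type*} [CommBipotentSemiring S] (hS : IsSemifield S) :
    ((∀ n : ℕ, 2 ≤ n →
        StronglyPermutable (MatSR S n) ∧ StronglyPermutable (UTMat S n)) ∧
     (∀ n : ℕ, 3 ≤ n → StronglyPermutable (UMat S n)))
      ↔ RingLikeIso S BoolSR := by
  constructor
  · rintro ⟨hMUT, -⟩
    rcases hS.ringLikeIso_boolSR_or_exists_mpow_injective with hiso | ⟨a, ha, hinj⟩
    · exact hiso
    · obtain ⟨k, -, hk⟩ := (hMUT 2 le_rfl).2
      exact absurd hk (not_kPermutable_utMat_two ha hinj k)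
  · intro hiso
    have := hiso.finite_of_boolSR
    exact ⟨fun n _ => ⟨stronglyPermutable_of_finite _, stronglyPermutable_of_finite _⟩,
      fun n _ => stronglyPermutable_of_finite _⟩
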